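/- There exists a magic permutohedron: a bijection ℓ from the permutations of Fin 4 to {1, 2, ..., 24} such that for every 2-element subset T of Fin 4 the sum of ℓ over the square facet F(T) equals 50, and for every subset T of Fin 4 of size 1 or 3 the sum of ℓ over the hexagonal facet F(T) equals 75. -/

import Mathlib

/-!
The functions `σ ↦ sign σ * b (σ i)` sum to zero over every facet `F(T)`: the permutations of
`F(T)` with `σ i = j` are permuted, with a change of sign, by composing with a transposition of
two values other than `j` that both lie in `{0, …, |T| - 1}` or both outside it. Hence every
labeling `12 + [σ even] + sign σ * ∑ i, a i * b (σ i)` has average `25 / 2` on every facet, and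
for a suitable choice of `a` and `b` it is a bijection onto `{1, …, 24}`.
-/

/-- The facet `F(T)` of the 3-permutohedron associated to a nonempty proper subset
`T` of `Fin 4`: the set of permutations `σ` with `σ(T) = {0, 1, …, |T| - 1}`. -/
def permutohedronFacet (T : Finset (Fin 4)) : Finset (Equiv.Perm (Fin 4)) :=
  Finset.univ.filter fun σ =>
    T.image σ = Finset.univ.filter fun j : Fin 4 => (j : ℕ) < T.card

open Equiv Equiv.Perm Finset

theorem Equiv.Perm.sum_sign_eq_zero_of_swap_mul_mem {α : Type*} [DecidableEq α] [Fintype α]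
    {s : Finset (Perm α)} {u v : α} (huv : u ≠ v) (hs : ∀ σ ∈ s, swap u v * σ ∈ s) :
    ∑ σ ∈ s, (sign σ : ℤ) = 0 :=
  sum_involution (fun σ _ ↦ swap u v * σ) (fun σ _ ↦ by simp [sign_swap huv])
    (fun _ _ _ h ↦ huv (swap_eq_one_iff.mp (mul_eq_right.mp h))) hs
    (fun σ _ ↦ swap_mul_self_mul u v σ)

theorem Finset.image_swap_filter {α : Type*} [DecidableEq α] [Fintype α] {p : α → Prop}
    [DecidablePred p] {u v : α} (huv : p u ↔ p v) :
    (univ.filter p).image (swap u v) = univ.filter p := by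
  have hp (x : α) : p (swap u v x) ↔ p x := by
    rw [swap_apply_def]
    split_ifs <;> simp_all
  ext j
  simp only [mem_image, mem_filter, mem_univ, true_and]
  exact ⟨fun ⟨x, hx, hj⟩ ↦ hj ▸ (hp x).mpr hx,
    fun hj ↦ ⟨swap u v j, (hp j).mpr hj, swap_apply_self _ _ _⟩⟩

theorem exists_monochromatic_pair_ne (p : Fin 4 → Bool) (j : Fin 4) :
    ∃ u v, u ≠ v ∧ u ≠ j ∧ v ≠ j ∧ p u = p v := by
  revert p j
  decide

theorem swap_mul_mem_permutohedronFacet {T : Finset (Fin 4)} {σ : Perm (Fin 4)} {u v : Fin 4}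
    (huv : (u : ℕ) < T.card ↔ (v : ℕ) < T.card) (hσ : σ ∈ permutohedronFacet T) :
    swap u v * σ ∈ permutohedronFacet T := by
  simp only [permutohedronFacet, mem_filter, mem_univ, true_and] at hσ ⊢
  rw [Perm.coe_mul, ← image_image, hσ, image_swap_filter huv]

theorem sum_sign_mul_apply_permutohedronFacet (T : Finset (Fin 4)) (i : Fin 4) (g : Fin 4 → ℤ) :
    ∑ σ ∈ permutohedronFacet T, (sign σ : ℤ) * g (σ i) = 0 := by
  rw [← sum_fiberwise _ (fun σ ↦ σ i)]
  refine sum_eq_zero fun j _ ↦ ?_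
  obtain ⟨u, v, huv, huj, hvj, hp⟩ :=
    exists_monochromatic_pair_ne (fun x ↦ decide ((x : ℕ) < T.card)) j
  rw [sum_congr rfl fun σ hσ ↦ by rw [(mem_filter.mp hσ).2], ← sum_mul]
  refine mul_eq_zero_of_left (sum_sign_eq_zero_of_swap_mul_mem huv fun σ hσ ↦ ?_) _
  rw [mem_filter] at hσ ⊢
  refine ⟨swap_mul_mem_permutohedronFacet (by simpa using hp) hσ.1, ?_⟩
  rw [Perm.mul_apply, hσ.2, swap_apply_of_ne_of_ne huj.symm hvj.symm]

theorem card_permutohedronFacet :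
    ∀ T, (permutohedronFacet T).card = T.card.factorial * (4 - T.card).factorial := by
  decide

def signedLabel (a b : Fin 4 → ℤ) (σ : Perm (Fin 4)) : ℤ :=
  12 + (if sign σ = 1 then 1 else 0) + sign σ * ∑ i, a i * b (σ i)

theorem two_mul_sum_signedLabel (a b : Fin 4 → ℤ) (T : Finset (Fin 4)) :
    2 * ∑ σ ∈ permutohedronFacet T, signedLabel a b σ =
      25 * (permutohedronFacet T).card := by
  have h2 (σ : Perm (Fin 4)) : 2 * signedLabel a b σ =
      25 + (sign σ : ℤ) * 1 + 2 * ∑ i, a i * ((sign σ : ℤ) * b (σ i)) := by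
    simp only [signedLabel, mul_left_comm _ (sign σ : ℤ), ← mul_sum]
    rcases Int.units_eq_one_or (sign σ) with h | h <;> simp [h] <;> ring
  rw [mul_sum, sum_congr rfl fun σ _ ↦ h2 σ, sum_add_distrib, sum_add_distrib,
    ← mul_sum, sum_comm]
  simp only [← mul_sum, sum_sign_mul_apply_permutohedronFacet T _ b,
    sum_sign_mul_apply_permutohedronFacet T 0 fun _ ↦ 1]
  simp [mul_comm]

-- Found by computer search.
def magicLabel : Perm (Fin 4) → ℤ := signedLabel ![-3, -1, 0, 2] ![0, -2, 2, 2]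

theorem magicLabel_toNat_mem : ∀ σ, (magicLabel σ).toNat ∈ Icc 1 24 := by
  decide

theorem magicLabel_toNat_injective : Function.Injective fun σ ↦ (magicLabel σ).toNat := by
  decide

noncomputable def magicLabeling : Perm (Fin 4) ≃ (Icc 1 24 : Finset ℕ) :=
  .ofBijective (fun σ ↦ ⟨_, magicLabel_toNat_mem σ⟩) <|
    (Fintype.bijective_iff_injective_and_card _).mpr
      ⟨fun _ _ h ↦ magicLabel_toNat_injective (congrArg Subtype.val h),
        by simp [Fintype.card_perm, Nat.factorial]⟩

theorem two_mul_sum_magicLabeling (T : Finset (Fin 4)) :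
    2 * ∑ σ ∈ permutohedronFacet T, (magicLabeling σ : ℕ) =
      25 * (T.card.factorial * (4 - T.card).factorial) := by
  have hcast (σ : Perm (Fin 4)) : ((magicLabeling σ : ℕ) : ℤ) = magicLabel σ := by
    have := (mem_Icc.mp (magicLabel_toNat_mem σ)).1
    exact Int.toNat_of_nonneg (by omega)
  have h : 2 * ∑ σ ∈ permutohedronFacet T, magicLabel σ = _ := two_mul_sum_signedLabel _ _ T
  rw [card_permutohedronFacet] at h
  rw [← Nat.cast_inj (R := ℤ)]
  push_cast [hcast] at h ⊢
  exact h

/-- There exists a magic permutohedron: a labeling of the vertices of the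
3-permutohedron by `{1, …, 24}` whose sum on every square facet is `50` and on every
hexagonal facet is `75`. -/
theorem exists_magic_permutohedron :
    ∃ ℓ : Equiv.Perm (Fin 4) ≃ (Finset.Icc 1 24 : Finset ℕ),
      (∀ T : Finset (Fin 4), T.card = 2 →
        ∑ σ ∈ permutohedronFacet T, (ℓ σ : ℕ) = 50) ∧
      (∀ T : Finset (Fin 4), T.card = 1 ∨ T.card = 3 →
        ∑ σ ∈ permutohedronFacet T, (ℓ σ : ℕ) = 75) := by
  refine ⟨magicLabeling, fun T hT ↦ ?_, fun T hT ↦ ?_⟩ <;> have h := two_mul_sum_magicLabeling T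
  · simp only [hT, Nat.factorial] at h
    omega
  · rcases hT with hT | hT <;> simp only [hT, Nat.factorial] at h <;> omega
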